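/- Let α₁, …, α_N be probability weights (αᵢ ≥ 0, Σᵢ αᵢ = 1), let γ₁, …, γ_N ≥ 0, and for each i let Lᵢ : ℝ^d → ℝ be differentiable with β(1+γᵢ)-Lipschitz gradient. Set L = Σᵢ αᵢ Lᵢ and γ̄ = Σᵢ αᵢ γᵢ, and suppose L satisfies the Polyak–Łojasiewicz (PL) condition with constant ρ > 0 relative to a value L*, i.e., (1/2)‖∇L(θ)‖² ≥ ρ(L(θ) − L*) for all θ. Then for any points θ̄, θ₁, …, θ_N ∈ ℝ^d, any vectors g₁, …, g_N ∈ ℝ^d with g = Σᵢ αᵢ gᵢ, and any η > 0: L(θ̄ − ηg) − L* ≤ (1 − ρη)(L(θ̄) − L*) + η Σᵢ αᵢ β²(1+γᵢ)² ‖θ̄ − θᵢ‖² + η ‖Σᵢ αᵢ ∇Lᵢ(θᵢ) − g‖² − (η/2)‖g‖² + (β(1+γ̄)η²/2)‖g‖². -/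

import Mathlib

/-!
Since `L = ∑ αᵢ Lᵢ` has a `β(1 + γ̄)`-Lipschitz gradient, the descent lemma bounds
`L(θ̄ - ηg)` by `L(θ̄) - η⟪∇L(θ̄), g⟫ + β(1 + γ̄)η²/2 ‖g‖²`. Polarizing,
`-η⟪∇L, g⟫ = η/2 (‖∇L - g‖² - ‖∇L‖² - ‖g‖²)`, and the PL condition turns `-η/2 ‖∇L‖²` into
`-ρη (L(θ̄) - L*)`. Finally `‖∇L(θ̄) - g‖² ≤ 2‖∇L(θ̄) - ∑ αᵢ ∇Lᵢ(θᵢ)‖² + 2‖∑ αᵢ ∇Lᵢ(θᵢ) - g‖²`,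
and Jensen's inequality for `‖·‖²` together with the Lipschitz bounds on the `∇Lᵢ` controls the
client-drift term.
-/

open InnerProductSpace Finset

theorem norm_sum_smul_sq_le {E ι : Type*} [SeminormedAddCommGroup E] [NormedSpace ℝ E]
    (s : Finset ι) {a : ι → ℝ} (ha : ∀ i ∈ s, 0 ≤ a i) (ha₁ : ∑ i ∈ s, a i = 1) (v : ι → E) :
    ‖∑ i ∈ s, a i • v i‖ ^ 2 ≤ ∑ i ∈ s, a i * ‖v i‖ ^ 2 :=
  ((convexOn_norm convex_univ).pow (fun _ _ => norm_nonneg _) 2).map_sum_le ha ha₁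
    (fun _ _ => Set.mem_univ _)

section Gradient

variable {E : Type*} [NormedAddCommGroup E] [InnerProductSpace ℝ E] [CompleteSpace E]

theorem HasGradientAt.sum_mul {ι : Type*} {s : Finset ι} {a : ι → ℝ} {f : ι → E → ℝ}
    {f' : ι → E} {x : E} (hf : ∀ i ∈ s, HasGradientAt (f i) (f' i) x) :
    HasGradientAt (fun y => ∑ i ∈ s, a i * f i y) (∑ i ∈ s, a i • f' i) x := by
  rw [hasGradientAt_iff_hasFDerivAt, map_sum]
  simp only [map_smul]
  exact HasFDerivAt.fun_sum fun i hi => (hf i hi).hasFDerivAt.const_mul (a i)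

theorem gradient_sum_mul {ι : Type*} (s : Finset ι) (a : ι → ℝ) {f : ι → E → ℝ}
    (hf : ∀ i ∈ s, Differentiable ℝ (f i)) (x : E) :
    gradient (fun y => ∑ i ∈ s, a i * f i y) x = ∑ i ∈ s, a i • gradient (f i) x :=
  (HasGradientAt.sum_mul fun i hi => (hf i hi x).hasGradientAt).gradient

theorem norm_gradient_sum_mul_sub_le {ι : Type*} (s : Finset ι) {a K : ι → ℝ} {f : ι → E → ℝ}
    (ha : ∀ i ∈ s, 0 ≤ a i) (hf : ∀ i ∈ s, Differentiable ℝ (f i))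
    (hK : ∀ i ∈ s, ∀ x y, ‖gradient (f i) x - gradient (f i) y‖ ≤ K i * ‖x - y‖) (x y : E) :
    ‖gradient (fun z => ∑ i ∈ s, a i * f i z) x - gradient (fun z => ∑ i ∈ s, a i * f i z) y‖
      ≤ (∑ i ∈ s, a i * K i) * ‖x - y‖ := by
  rw [gradient_sum_mul s a hf, gradient_sum_mul s a hf, ← sum_sub_distrib, sum_mul]
  refine (norm_sum_le _ _).trans (sum_le_sum fun i hi => ?_)
  rw [← smul_sub, norm_smul, Real.norm_of_nonneg (ha i hi), mul_assoc]
  exact mul_le_mul_of_nonneg_left (hK i hi x y) (ha i hi)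

variable {f : E → ℝ} {C : ℝ}

theorem hasDerivAt_apply_add_smul (hf : Differentiable ℝ f) (x v : E) (t : ℝ) :
    HasDerivAt (fun s : ℝ => f (x + s • v)) ⟪gradient f (x + t • v), v⟫_ℝ t := by
  have hline : HasDerivAt (fun s : ℝ => x + s • v) v t := by
    simpa using ((hasDerivAt_id t).smul_const v).const_add x
  exact ((hf _).hasGradientAt.hasFDerivAt.comp_hasDerivAt t hline).congr_deriv
    toDual_apply_apply

theorem apply_add_le_of_gradient_lipschitz (hf : Differentiable ℝ f)
    (hLip : ∀ x y, ‖gradient f x - gradient f y‖ ≤ C * ‖x - y‖) (x v : E) :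
    f (x + v) ≤ f x + ⟪gradient f x, v⟫_ℝ + C / 2 * ‖v‖ ^ 2 := by
  -- `φ` is antitone on `[0, ∞)`, and `φ 1 ≤ φ 0` is the claim.
  set φ : ℝ → ℝ := fun t => f (x + t • v) - t * ⟪gradient f x, v⟫_ℝ - C / 2 * t ^ 2 * ‖v‖ ^ 2
  have hφ' : ∀ t, HasDerivAt φ
      (⟪gradient f (x + t • v), v⟫_ℝ - ⟪gradient f x, v⟫_ℝ - C * t * ‖v‖ ^ 2) t := fun t => by
    refine (((hasDerivAt_apply_add_smul hf x v t).sub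
      ((hasDerivAt_id t).mul_const ⟪gradient f x, v⟫_ℝ)).sub
      (((hasDerivAt_pow 2 t).const_mul (C / 2)).mul_const (‖v‖ ^ 2))).congr_deriv ?_
    push_cast
    ring
  have hφ'_nonpos : ∀ t, 0 ≤ t →
      ⟪gradient f (x + t • v), v⟫_ℝ - ⟪gradient f x, v⟫_ℝ - C * t * ‖v‖ ^ 2 ≤ 0 := by
    intro t ht
    have hgrad := hLip (x + t • v) x
    rw [add_sub_cancel_left, norm_smul, Real.norm_of_nonneg ht] at hgrad
    have := (real_inner_le_norm (gradient f (x + t • v) - gradient f x) v).trans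
      (mul_le_mul_of_nonneg_right hgrad (norm_nonneg v))
    rw [inner_sub_left] at this
    linarith
  have hanti : AntitoneOn φ (Set.Ici 0) :=
    antitoneOn_of_hasDerivWithinAt_nonpos (convex_Ici 0)
      (fun t _ => (hφ' t).continuousAt.continuousWithinAt)
      (fun t _ => (hφ' t).hasDerivWithinAt)
      (fun t ht => hφ'_nonpos t (interior_subset ht))
  have := hanti Set.self_mem_Ici (show (0 : ℝ) ≤ 1 from zero_le_one) zero_le_one
  simp only [φ, zero_smul, add_zero, one_smul, zero_mul, sub_zero, one_mul, one_pow] at this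
  linarith

theorem pl_inexact_gradient_step (hf : Differentiable ℝ f)
    (hLip : ∀ x y, ‖gradient f x - gradient f y‖ ≤ C * ‖x - y‖) {ρ fstar : ℝ}
    (hPL : ∀ x, ρ * (f x - fstar) ≤ (1 / 2) * ‖gradient f x‖ ^ 2) (x g : E) {η : ℝ}
    (hη : 0 ≤ η) :
    f (x - η • g) - fstar ≤ (1 - ρ * η) * (f x - fstar) + η / 2 * ‖gradient f x - g‖ ^ 2
      - η / 2 * ‖g‖ ^ 2 + C * η ^ 2 / 2 * ‖g‖ ^ 2 := by
  have hdescent := apply_add_le_of_gradient_lipschitz hf hLip x (-(η • g))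
  rw [← sub_eq_add_neg, inner_neg_right, real_inner_smul_right, norm_neg, norm_smul,
    Real.norm_of_nonneg hη] at hdescent
  have hpolar := congrArg (η / 2 * ·) (norm_sub_sq_real (gradient f x) g)
  linarith [mul_le_mul_of_nonneg_left (hPL x) hη]

end Gradient

theorem federated_pl_descent_general {d N : ℕ} (α γ : Fin N → ℝ)
    (hα : ∀ i, 0 ≤ α i) (hαsum : ∑ i, α i = 1)
    (β : ℝ)
    (Li : Fin N → EuclideanSpace ℝ (Fin d) → ℝ)
    (hLi : ∀ i, Differentiable ℝ (Li i))
    (hLip : ∀ i θ θ',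
      ‖gradient (Li i) θ - gradient (Li i) θ'‖ ≤ β * (1 + γ i) * ‖θ - θ'‖)
    (L : EuclideanSpace ℝ (Fin d) → ℝ) (hLdef : L = fun θ => ∑ i, α i * Li i θ)
    (γbar : ℝ) (hγbar : γbar = ∑ i, α i * γ i)
    (ρ : ℝ) (Lstar : ℝ)
    (hPL : ∀ θ, ρ * (L θ - Lstar) ≤ (1/2) * ‖gradient L θ‖^2)
    (θbar : EuclideanSpace ℝ (Fin d)) (θi : Fin N → EuclideanSpace ℝ (Fin d))
    (g : EuclideanSpace ℝ (Fin d))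
    (η : ℝ) (hη : 0 < η) :
    L (θbar - η • g) - Lstar
      ≤ (1 - ρ * η) * (L θbar - Lstar)
        + η * ∑ i, α i * β^2 * (1 + γ i)^2 * ‖θbar - θi i‖^2
        + η * ‖(∑ i, α i • gradient (Li i) (θi i)) - g‖^2
        - (η/2) * ‖g‖^2
        + (β * (1 + γbar) * η^2 / 2) * ‖g‖^2 := by
  subst hLdef
  have hLdiff : Differentiable ℝ fun θ => ∑ i, α i * Li i θ :=
    Differentiable.fun_sum fun i _ => (hLi i).const_mul (α i)
  have hLipConst : ∑ i, α i * (β * (1 + γ i)) = β * (1 + γbar) := calc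
    _ = β * (∑ i, α i + ∑ i, α i * γ i) := by
      rw [← sum_add_distrib, mul_sum]; exact sum_congr rfl fun i _ => by ring
    _ = β * (1 + γbar) := by rw [hαsum, hγbar]
  have hLipL := hLipConst ▸ norm_gradient_sum_mul_sub_le univ (fun i _ => hα i)
    (fun i _ => hLi i) (fun i _ => hLip i)
  have hstep := pl_inexact_gradient_step hLdiff hLipL hPL θbar g hη.le
  set G := gradient (fun θ => ∑ i, α i * Li i θ) θbar with hG
  set H := ∑ i, α i • gradient (Li i) (θi i)
  have hdrift : ‖G - H‖ ^ 2 ≤ ∑ i, α i * β ^ 2 * (1 + γ i) ^ 2 * ‖θbar - θi i‖ ^ 2 := by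
    rw [hG, gradient_sum_mul univ α (fun i _ => hLi i), ← sum_sub_distrib]
    simp only [← smul_sub]
    refine (norm_sum_smul_sq_le _ (fun i _ => hα i) hαsum _).trans (sum_le_sum fun i _ => ?_)
    calc α i * ‖gradient (Li i) θbar - gradient (Li i) (θi i)‖ ^ 2
        ≤ α i * (β * (1 + γ i) * ‖θbar - θi i‖) ^ 2 := by gcongr; exacts [hα i, hLip i _ _]
      _ = α i * β ^ 2 * (1 + γ i) ^ 2 * ‖θbar - θi i‖ ^ 2 := by ring
  have hsplit : ‖G - g‖ ^ 2 ≤ 2 * (‖G - H‖ ^ 2 + ‖H - g‖ ^ 2) :=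
    (pow_le_pow_left₀ (norm_nonneg _) (norm_sub_le_norm_sub_add_norm_sub G H g) 2).trans add_sq_le
  linarith [mul_le_mul_of_nonneg_left hsplit hη.le, mul_le_mul_of_nonneg_left hdrift hη.le]

/-- Per-round federated descent inequality under the PL condition with client drift
and inexact local gradients. -/
theorem federated_pl_descent {d N : ℕ} (α γ : Fin N → ℝ)
    (hα : ∀ i, 0 ≤ α i) (hαsum : ∑ i, α i = 1) (hγ : ∀ i, 0 ≤ γ i)
    (β : ℝ)
    (Li : Fin N → EuclideanSpace ℝ (Fin d) → ℝ)
    (hLi : ∀ i, Differentiable ℝ (Li i))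
    (hLip : ∀ i θ θ',
      ‖gradient (Li i) θ - gradient (Li i) θ'‖ ≤ β * (1 + γ i) * ‖θ - θ'‖)
    (L : EuclideanSpace ℝ (Fin d) → ℝ) (hLdef : L = fun θ => ∑ i, α i * Li i θ)
    (γbar : ℝ) (hγbar : γbar = ∑ i, α i * γ i)
    (ρ : ℝ) (hρ : 0 < ρ) (Lstar : ℝ)
    (hPL : ∀ θ, ρ * (L θ - Lstar) ≤ (1/2) * ‖gradient L θ‖^2)
    (θbar : EuclideanSpace ℝ (Fin d)) (θi gi : Fin N → EuclideanSpace ℝ (Fin d))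
    (g : EuclideanSpace ℝ (Fin d)) (hg : g = ∑ i, α i • gi i)
    (η : ℝ) (hη : 0 < η) :
    L (θbar - η • g) - Lstar
      ≤ (1 - ρ * η) * (L θbar - Lstar)
        + η * ∑ i, α i * β^2 * (1 + γ i)^2 * ‖θbar - θi i‖^2
        + η * ‖(∑ i, α i • gradient (Li i) (θi i)) - g‖^2
        - (η/2) * ‖g‖^2
        + (β * (1 + γbar) * η^2 / 2) * ‖g‖^2 :=
  federated_pl_descent_general α γ hα hαsum β Li hLi hLip L hLdef γbar hγbar ρ Lstar hPL θbar θi g η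
    hη
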